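/- Soundness of the min-max reciprocal approximation (positive case): let a, b be real numbers with 0 < a < b, and let y ∈ [a, b]. With p = −1/b², q = (a+b)²/(2ab²) and d = (a−b)²/(2ab²), the reciprocal satisfies |1/y − (p·y + q)| ≤ d; equivalently, there exists ε* ∈ [−1,1] such that 1/y = p·y + q + d·ε*. -/

import Mathlib

/-! The error `e(y) = 1/y - (p y + q)` of the min-max line equioscillates on `[a, b]`:
`e + d = (y - b)² / (b² y)` and `d - e = (y - a)(b² - a y) / (a b² y)`, where
`b² - a y ≥ b² - a b ≥ 0`. Both are nonnegative, i.e. `|e| ≤ d`, and `ε* = e / d` lies in `[-1, 1]`. -/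

lemma exists_mem_Icc_eq_mul_of_abs_le {e d : ℝ} (h : |e| ≤ d) :
    ∃ ε ∈ Set.Icc (-1 : ℝ) 1, e = d * ε := by
  rcases ((abs_nonneg e).trans h).eq_or_lt with rfl | hd
  · exact ⟨0, by norm_num, by simpa using h⟩
  refine ⟨e / d, abs_le.mp ?_, (mul_div_cancel₀ e hd.ne').symm⟩
  rw [abs_div, abs_of_pos hd]
  exact div_le_one_of_le₀ h hd.le

section MinmaxReciprocal

variable {a b y : ℝ}

lemma inv_sub_minmax_add_eq (ha : a ≠ 0) (hb : b ≠ 0) (hy : y ≠ 0) :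
    1 / y - ((-1 / b ^ 2) * y + (a + b) ^ 2 / (2 * a * b ^ 2)) + (a - b) ^ 2 / (2 * a * b ^ 2) =
      (y - b) ^ 2 / (b ^ 2 * y) := by
  field_simp
  ring

lemma minmax_sub_inv_sub_eq (ha : a ≠ 0) (hb : b ≠ 0) (hy : y ≠ 0) :
    (a - b) ^ 2 / (2 * a * b ^ 2) - (1 / y - ((-1 / b ^ 2) * y + (a + b) ^ 2 / (2 * a * b ^ 2))) =
      (y - a) * (b ^ 2 - a * y) / (a * b ^ 2 * y) := by
  field_simp
  ring

lemma abs_inv_sub_minmax_le (ha : 0 < a) (hy : y ∈ Set.Icc a b) :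
    |1 / y - ((-1 / b ^ 2) * y + (a + b) ^ 2 / (2 * a * b ^ 2))| ≤
      (a - b) ^ 2 / (2 * a * b ^ 2) := by
  obtain ⟨hay, hyb⟩ := hy
  have hy0 : 0 < y := ha.trans_le hay
  have hb : 0 < b := hy0.trans_le hyb
  have hlower : 0 ≤ (y - b) ^ 2 / (b ^ 2 * y) := by positivity
  have hupper : 0 ≤ (y - a) * (b ^ 2 - a * y) / (a * b ^ 2 * y) := by
    have hay_le : a * y ≤ b ^ 2 := by nlinarith
    exact div_nonneg (mul_nonneg (by linarith) (by linarith)) (by positivity)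
  rw [← inv_sub_minmax_add_eq ha.ne' hb.ne' hy0.ne'] at hlower
  rw [← minmax_sub_inv_sub_eq ha.ne' hb.ne' hy0.ne'] at hupper
  exact abs_le.mpr ⟨by linarith, by linarith⟩

end MinmaxReciprocal

theorem minmax_reciprocal_sound_general (a b y : ℝ) (ha : 0 < a)
    (hy : y ∈ Set.Icc a b) :
    |1 / y - ((-1 / b ^ 2) * y + (a + b) ^ 2 / (2 * a * b ^ 2))| ≤
        (a - b) ^ 2 / (2 * a * b ^ 2) ∧
      ∃ εstar ∈ Set.Icc (-1 : ℝ) 1,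
        1 / y = (-1 / b ^ 2) * y + (a + b) ^ 2 / (2 * a * b ^ 2) +
          (a - b) ^ 2 / (2 * a * b ^ 2) * εstar := by
  have hbound := abs_inv_sub_minmax_le ha hy
  obtain ⟨ε, hε, he⟩ := exists_mem_Icc_eq_mul_of_abs_le hbound
  exact ⟨hbound, ε, hε, by rw [← he]; ring⟩

/-- Soundness of the min-max reciprocal approximation (positive case):
for 0 < a < b and y ∈ [a,b], with p = −1/b², q = (a+b)²/(2ab²),
d = (a−b)²/(2ab²), we have |1/y − (p·y + q)| ≤ d; equivalently,
there exists ε* ∈ [−1,1] with 1/y = p·y + q + d·ε*. -/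
theorem minmax_reciprocal_sound (a b y : ℝ) (ha : 0 < a) (hab : a < b)
    (hy : y ∈ Set.Icc a b) :
    |1 / y - ((-1 / b ^ 2) * y + (a + b) ^ 2 / (2 * a * b ^ 2))| ≤
        (a - b) ^ 2 / (2 * a * b ^ 2) ∧
      ∃ εstar ∈ Set.Icc (-1 : ℝ) 1,
        1 / y = (-1 / b ^ 2) * y + (a + b) ^ 2 / (2 * a * b ^ 2) +
          (a - b) ^ 2 / (2 * a * b ^ 2) * εstar :=
  minmax_reciprocal_sound_general a b y ha hy
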